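/- Let U(X,Y,z) = ∑_{n≥0} P_n(X,Y)·z^{n+1}/(n+1) where P_n(X,Y) = ∑_{j=0}^{n} (-1)^j binom(n+j,j) binom(3n+1,n-j) X^{2n+1+j} Y^{n-j}. Then U satisfies, as formal power series in z over the polynomial ring in X, Y, the cubic equation U·(1 - XY·U)·(1 - X(Y-X)·U) = X·z. -/

import Mathlib

open MvPolynomial

/-- The polynomial `P_n(X,Y)` as a polynomial in the two variables `X = X 0`, `Y = X 1`. -/
noncomputable def nielsenP (n : ℕ) : MvPolynomial (Fin 2) ℚ :=
  ∑ j ∈ Finset.range (n + 1),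
    (-1) ^ j * (Nat.choose (n + j) j : MvPolynomial (Fin 2) ℚ)
      * (Nat.choose (3 * n + 1) (n - j) : MvPolynomial (Fin 2) ℚ)
      * (X 0) ^ (2 * n + 1 + j) * (X 1) ^ (n - j)

/-- The generating series `U(X,Y,z) = ∑_{n ≥ 0} P_n(X,Y) z^{n+1}/(n+1)`. -/
noncomputable def genU : PowerSeries (MvPolynomial (Fin 2) ℚ) :=
  PowerSeries.mk fun k =>
    match k with
    | 0 => 0
    | n + 1 => MvPolynomial.C (((n : ℚ) + 1)⁻¹) * nielsenP n

/-!
`U` is the Lagrange series of `φ(w) = X / ((1 - XY w) (1 - X(Y - X) w))`, so it should solve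
`U = z φ(U)`, which is the cubic with its denominators cleared. Lagrange inversion is proved for
every `φ = c / Q` with `Q = 1 - s w + p w^2`: a solution `V` of `V Q(V) = c z` exists as a
compositional inverse, and the Bürmann formula `n [z^n] V^k = k [w^(n-k)] φ^n` follows by
induction, downwards in `k`, from `V^k = c z V^(k-1) + s V^(k+1) - p V^(k+2)` and from the
relations `φ Q = c` and `c φ' = (s - 2 p w) φ^2`. Finally `[w^n] φ^(n+1) = P_n`: with
`G = 1 / (1 - XY w)` one has `1 / (1 - X(Y - X) w) = G / (1 + X^2 w G)`, whose `(n+1)`-st power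
is expanded binomially modulo `w^(n+1)`.
-/

open Finset

namespace PowerSeries

variable {R : Type*} [CommRing R]

theorem coeff_X_mul_derivative (f : R⟦X⟧) (n : ℕ) :
    coeff n (X * d⁄dX R f) = n * coeff n f := by
  rcases n with _ | n
  · simp
  · rw [coeff_succ_X_mul, coeff_derivative]
    push_cast
    ring

theorem coeff_pow_eq_zero_of_lt {V : R⟦X⟧} (hV0 : constantCoeff V = 0) {n k : ℕ} (h : n < k) :
    coeff n (V ^ k) = 0 :=
  X_pow_dvd_iff.mp (pow_dvd_pow_of_dvd (X_dvd_iff.mpr hV0) k) n h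

theorem exists_mul_one_sub_add_eq_C_mul_X (s p c : R) :
    ∃ V : R⟦X⟧, constantCoeff V = 0 ∧ V * (1 - C s * V + C p * V ^ 2) = C c * X := by
  set P : R⟦X⟧ := X * (1 - C s * X + C p * X ^ 2)
  have hP0 : constantCoeff P = 0 := by simp [P]
  have hP1 : IsUnit (coeff 1 P) := by simp [P, coeff_succ_X_mul]
  set W := P.substInvOfIsUnit hP1
  have hW : HasSubst W := HasSubst.substInvOfIsUnit P hP1
  have hsubst_C (r : R) : substAlgHom hW (C r) = C r := (substAlgHom hW).commutes r
  have hPW : W * (1 - C s * W + C p * W ^ 2) = X := by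
    have h := subst_substInvOfIsUnit_right P hP0 hP1
    rw [← coe_substAlgHom hW] at h
    simpa [P, substAlgHom_X, hsubst_C] using h
  have hrescale_C (r : R) : rescale c (C r) = C r := by
    ext n
    rw [coeff_rescale, coeff_C]
    split_ifs with h <;> simp [h]
  refine ⟨rescale c W, ?_, ?_⟩
  · rw [← coeff_zero_eq_constantCoeff_apply, coeff_rescale, pow_zero, one_mul,
      coeff_zero_eq_constantCoeff_apply, constantCoeff_substInvOfIsUnit]
  · simpa [rescale_X, hrescale_C] using congrArg (rescale c) hPW

section LagrangeInversion

variable {s p c : R} {φ : R⟦X⟧}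

theorem C_mul_derivative_of_mul_eq_C (hφ : φ * (1 - C s * X + C p * X ^ 2) = C c) :
    C c * d⁄dX R φ = (C s - 2 * C p * X) * φ ^ 2 := by
  have h := congrArg (d⁄dX R) hφ
  simp only [Derivation.leibniz, Derivation.leibniz_pow, Derivation.map_one_eq_zero, derivative_C,
    derivative_X, map_add, map_sub, smul_eq_mul, nsmul_eq_mul] at h
  rw [← hφ]
  linear_combination φ * h

theorem C_mul_derivative_pow_of_mul_eq_C (hφ : φ * (1 - C s * X + C p * X ^ 2) = C c) (n : ℕ) :
    C c * d⁄dX R (φ ^ n) = (n : R⟦X⟧) * (C s - 2 * C p * X) * φ ^ (n + 1) := by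
  rcases n with _ | n
  · simp
  · rw [Derivation.leibniz_pow, smul_eq_mul, nsmul_eq_mul, Nat.add_sub_cancel]
    push_cast
    linear_combination ((n + 1 : R⟦X⟧) * φ ^ n) * C_mul_derivative_of_mul_eq_C hφ

/-- `coeff n (X ^ k * φ ^ n)` is `[w^(n-k)] φ^n`, and vanishes for `k > n`. -/
theorem coeff_X_pow_mul_pow_recurrence (hφ : φ * (1 - C s * X + C p * X ^ 2) = C c) (n k : ℕ) :
    (n : R) * (k + 1) * coeff (n + 1) (X ^ (k + 1) * φ ^ (n + 1))
      = (n + 1) * k * (c * coeff n (X ^ k * φ ^ n))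
        + n * (k + 2) * (s * coeff (n + 1) (X ^ (k + 2) * φ ^ (n + 1)))
        - n * (k + 3) * (p * coeff (n + 1) (X ^ (k + 3) * φ ^ (n + 1))) := by
  set g := X ^ (k + 1) * φ ^ n
  set f : ℕ → R⟦X⟧ := fun j => X ^ (k + j) * φ ^ (n + 1)
  have hg : coeff (n + 1) g = coeff n (X ^ k * φ ^ n) := by
    rw [show g = X * (X ^ k * φ ^ n) by ring, coeff_succ_X_mul]
  have hQ : f 1 - C s * f 2 + C p * f 3 = C c * g := by
    simp only [f, g]
    linear_combination X ^ (k + 1) * φ ^ n * hφ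
  have hEuler : X * d⁄dX R (C c * g)
      = C (k + 1 : R) * (C c * g) + C (n * s) * f 2 - C (2 * n * p) * f 3 := by
    simp only [g, f, Derivation.leibniz, Derivation.leibniz_pow (d⁄dX R) X, derivative_X,
      derivative_C, smul_eq_mul, nsmul_eq_mul, Nat.add_sub_cancel, map_add, map_mul, map_natCast,
      map_ofNat, map_one]
    push_cast
    linear_combination X ^ (k + 2) * C_mul_derivative_pow_of_mul_eq_C hφ n
  have h₁ := congrArg (coeff (n + 1)) hQ
  have h₂ := (congrArg (coeff (n + 1)) hEuler).symm.trans
    (coeff_X_mul_derivative (C c * g) (n + 1))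
  simp only [map_add, map_sub, add_mul, map_one, one_mul, coeff_C_mul, hg, f] at h₁ h₂
  push_cast at h₂
  linear_combination (n * (k + 1) : R) * h₁ - h₂

variable [IsAddTorsionFree R]

theorem natCast_mul_coeff_pow_eq (hφ : φ * (1 - C s * X + C p * X ^ 2) = C c) {V : R⟦X⟧}
    (hV0 : constantCoeff V = 0) (hV : V * (1 - C s * V + C p * V ^ 2) = C c * X) :
    ∀ n k : ℕ, (n : R) * coeff n (V ^ k) = k * coeff n (X ^ k * φ ^ n)
  | 0, k => by rcases k with _ | k <;> simp
  | n + 1, 0 => by simp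
  | n + 1, k + 1 =>
    if hnk : n < k then by
      rw [coeff_pow_eq_zero_of_lt hV0 (by omega), coeff_X_pow_mul', if_neg (by omega)]
      simp
    else by
      have hrec : coeff (n + 1) (V ^ (k + 1))
          = c * coeff n (V ^ k) + s * coeff (n + 1) (V ^ (k + 2))
            - p * coeff (n + 1) (V ^ (k + 3)) := by
        have h : V ^ (k + 1) = C c * X * V ^ k + C s * V ^ (k + 2) - C p * V ^ (k + 3) := by
          linear_combination V ^ k * hV
        rw [h, map_sub, map_add, mul_comm (C c), mul_assoc, coeff_succ_X_mul, coeff_C_mul,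
          coeff_C_mul, coeff_C_mul]
      have ih₁ := natCast_mul_coeff_pow_eq hφ hV0 hV n k
      have ih₂ := natCast_mul_coeff_pow_eq hφ hV0 hV (n + 1) (k + 2)
      have ih₃ := natCast_mul_coeff_pow_eq hφ hV0 hV (n + 1) (k + 3)
      rcases n.eq_zero_or_pos with rfl | hn
      · obtain rfl : k = 0 := by omega
        have hφ0 : constantCoeff φ = c := by simpa using congrArg constantCoeff hφ
        rw [hrec, coeff_pow_eq_zero_of_lt hV0 (k := 0 + 2) (by omega),
          coeff_pow_eq_zero_of_lt hV0 (k := 0 + 3) (by omega)]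
        simp [hφ0, coeff_succ_X_mul]
      · refine nsmul_right_injective hn.ne' ?_
        simp only [nsmul_eq_mul]
        push_cast at ih₁ ih₂ ih₃ ⊢
        linear_combination (n * (n + 1) : R) * hrec + ((n + 1) * c : R) * ih₁
          + (n * s : R) * ih₂ - (n * p : R) * ih₃ - coeff_X_pow_mul_pow_recurrence hφ n k
termination_by n k => 2 * n + 2 - k

theorem lagrange_inversion_of_mul_quadratic_eq_C (hφ : φ * (1 - C s * X + C p * X ^ 2) = C c)
    {U : R⟦X⟧} (hU0 : constantCoeff U = 0)
    (hU : ∀ n : ℕ, (n + 1 : R) * coeff (n + 1) U = coeff n (φ ^ (n + 1))) :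
    U * (1 - C s * U + C p * U ^ 2) = C c * X := by
  obtain ⟨V, hV0, hV⟩ := exists_mul_one_sub_add_eq_C_mul_X s p c
  suffices U = V by rwa [this]
  ext n
  rcases n with _ | n
  · simp [hU0, hV0]
  · refine nsmul_right_injective n.succ_ne_zero ?_
    have hVn := natCast_mul_coeff_pow_eq hφ hV0 hV (n + 1) 1
    simp only [nsmul_eq_mul, Nat.cast_succ, hU]
    simpa [coeff_succ_X_mul] using hVn.symm

end LagrangeInversion

theorem _root_.pow_dvd_one_add_pow_mul_sum_sub_one {A : Type*} [CommRing A] (t : A) (n : ℕ) :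
    t ^ (n + 1) ∣
      (1 + t) ^ (n + 1) * ∑ k ∈ range (n + 1), (-1) ^ k * ((n + k).choose k : A) * t ^ k
        - 1 := by
  set S : Polynomial ℤ :=
    ∑ k ∈ range (n + 1), Polynomial.C ((-1) ^ k * ((n + k).choose k : ℤ)) * Polynomial.X ^ k
  suffices Polynomial.X ^ (n + 1) ∣ (1 + Polynomial.X) ^ (n + 1) * S - 1 by
    simpa [S] using map_dvd (Polynomial.aeval t) this
  -- `B` is the expansion of `(1 + X)⁻ⁿ⁻¹`, and `S` is its truncation
  set B : ℤ⟦X⟧ := mk fun k => (-1) ^ k * ((n + k).choose k : ℤ)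
  have hB : (1 + X) ^ (n + 1) * B = 1 := by
    have h := congrArg (rescale (-1 : ℤ)) (mk_add_choose_mul_one_sub_pow_eq_one ℤ (d := n))
    rw [map_mul, map_pow, map_sub, map_one, rescale_neg_one_X, rescale_mk, sub_neg_eq_add] at h
    refine Eq.trans ?_ h
    rw [mul_comm]
    congr 1
    ext k
    rw [coeff_mk, coeff_mk, Nat.choose_symm_add]
  have hSB : X ^ (n + 1) ∣ (S : ℤ⟦X⟧) - B := by
    refine X_pow_dvd_iff.mpr fun d hd => ?_
    simp only [S, B, map_sub, coeff_mk, Polynomial.coeff_coe, Polynomial.finsetSum_coeff,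
      Polynomial.coeff_C_mul_X_pow]
    simp [hd]
  set q : Polynomial ℤ := (1 + Polynomial.X) ^ (n + 1) * S - 1
  have hdvd : X ^ (n + 1) ∣ (q : ℤ⟦X⟧) := by
    have h : (q : ℤ⟦X⟧) = (1 + X) ^ (n + 1) * ((S : ℤ⟦X⟧) - B) := by
      simp only [q]
      push_cast
      linear_combination hB
    exact h ▸ dvd_mul_of_dvd_right hSB _
  refine Polynomial.X_pow_dvd_iff.mpr fun d hd => ?_
  rw [← Polynomial.coeff_coe]
  exact X_pow_dvd_iff.mp hdvd d hd

theorem rescale_mk_one_mul_one_sub_C_mul_X (a : R) : rescale a (mk 1) * (1 - C a * X) = 1 := by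
  simpa [rescale_X] using congrArg (rescale a) (mk_one_mul_one_sub_eq_one R)

theorem coeff_rescale_mk_one_pow (a : R) (d n : ℕ) :
    coeff n (rescale a (mk 1) ^ (d + 1)) = (d + n).choose d * a ^ n := by
  rw [← map_pow, mk_one_pow_eq_mk_choose_add, coeff_rescale, coeff_mk, mul_comm]

theorem C_mul_rescale_mk_one_mul_rescale_mk_one_mul_eq_C (a b c : R) :
    C c * (rescale a (mk 1) * rescale b (mk 1)) * (1 - C (a + b) * X + C (a * b) * X ^ 2)
      = C c := by
  simp only [map_add, map_mul]
  linear_combination C c * rescale b (mk 1) * (1 - C b * X) * rescale_mk_one_mul_one_sub_C_mul_X a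
    + C c * rescale_mk_one_mul_one_sub_C_mul_X b

theorem coeff_rescale_mk_one_mul_pow (a b : R) (n : ℕ) :
    coeff n ((rescale a (mk 1) * rescale b (mk 1)) ^ (n + 1))
      = ∑ j ∈ range (n + 1),
          (-1) ^ j * ((n + j).choose j : R) * ((3 * n + 1).choose (n - j) : R) * (a - b) ^ j
            * a ^ (n - j) := by
  set G := rescale a (mk 1)
  set H := rescale b (mk 1)
  set T := (C a - C b) * X * G
  set S := ∑ j ∈ range (n + 1), (-1) ^ j * ((n + j).choose j : R⟦X⟧) * T ^ j with hS
  have hHT : H * (1 + T) = G := by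
    linear_combination G * rescale_mk_one_mul_one_sub_C_mul_X b
      - H * rescale_mk_one_mul_one_sub_C_mul_X a
  have hdvd : X ^ (n + 1) ∣ (G * H) ^ (n + 1) - G ^ (2 * n + 2) * S := by
    have hXT : X ^ (n + 1) ∣ T ^ (n + 1) := pow_dvd_pow_of_dvd ⟨(C a - C b) * G, by ring⟩ _
    have hG : G ^ (2 * n + 2) = (G * H) ^ (n + 1) * (1 + T) ^ (n + 1) := by
      rw [← mul_pow, mul_assoc, hHT]
      ring
    rw [hG, show ∀ x y z : R⟦X⟧, x - x * y * z = -x * (y * z - 1) by intros; ring]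
    exact dvd_mul_of_dvd_right (hXT.trans (pow_dvd_one_add_pow_mul_sum_sub_one T n)) _
  have hcoeff : coeff n ((G * H) ^ (n + 1)) = coeff n (G ^ (2 * n + 2) * S) :=
    sub_eq_zero.mp (by rw [← map_sub]; exact X_pow_dvd_iff.mp hdvd n n.lt_succ_self)
  rw [hcoeff, hS, mul_sum, map_sum]
  refine sum_congr rfl fun j hj => ?_
  have hjn : j ≤ n := Nat.lt_succ_iff.mp (mem_range.mp hj)
  have hterm : G ^ (2 * n + 2) * ((-1) ^ j * ((n + j).choose j : R⟦X⟧) * T ^ j)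
      = C ((-1) ^ j * (n + j).choose j * (a - b) ^ j) * (X ^ j * G ^ (2 * n + 1 + j + 1)) := by
    simp only [T, mul_pow, map_mul, map_pow, map_sub, map_neg, map_one, map_natCast]
    ring
  rw [hterm, coeff_C_mul, coeff_X_pow_mul', if_pos hjn, coeff_rescale_mk_one_pow,
    Nat.choose_symm_add, show 2 * n + 1 + j + (n - j) = 3 * n + 1 by omega]
  ring

end PowerSeries

-- `φ(w) = X / ((1 - XY w) (1 - X(Y - X) w))`, as `rescale a (mk 1) = 1 / (1 - a w)`
noncomputable def nielsenPhi : PowerSeries (MvPolynomial (Fin 2) ℚ) :=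
  PowerSeries.C (X 0) * (PowerSeries.rescale (X 0 * X 1) (PowerSeries.mk 1)
    * PowerSeries.rescale (X 0 * (X 1 - X 0)) (PowerSeries.mk 1))

theorem nielsenP_eq_coeff_nielsenPhi_pow (n : ℕ) :
    nielsenP n = PowerSeries.coeff n (nielsenPhi ^ (n + 1)) := by
  rw [nielsenPhi, mul_pow, ← map_pow, PowerSeries.coeff_C_mul,
    PowerSeries.coeff_rescale_mk_one_mul_pow, nielsenP, mul_sum]
  refine sum_congr rfl fun j hj => ?_
  have hjn : j ≤ n := Nat.lt_succ_iff.mp (mem_range.mp hj)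
  rw [show X 0 * X 1 - X 0 * (X 1 - X 0) = (X 0 ^ 2 : MvPolynomial (Fin 2) ℚ) by ring,
    show 2 * n + 1 + j = (n + 1) + 2 * j + (n - j) by omega, pow_add, pow_add]
  ring

theorem natCast_succ_mul_coeff_genU (n : ℕ) :
    (n + 1 : MvPolynomial (Fin 2) ℚ) * PowerSeries.coeff (n + 1) genU
      = PowerSeries.coeff n (nielsenPhi ^ (n + 1)) := by
  rw [← nielsenP_eq_coeff_nielsenPhi_pow, genU, PowerSeries.coeff_mk, ← mul_assoc,
    show (n + 1 : MvPolynomial (Fin 2) ℚ) = C ((n : ℚ) + 1) by simp, ← map_mul,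
    mul_inv_cancel₀ (by positivity), map_one, one_mul]

theorem stmt12 :
    genU * (1 - (PowerSeries.C (R := MvPolynomial (Fin 2) ℚ)) (X 0 * X 1) * genU)
      * (1 - (PowerSeries.C (R := MvPolynomial (Fin 2) ℚ)) (X 0 * (X 1 - X 0)) * genU)
      = (PowerSeries.C (R := MvPolynomial (Fin 2) ℚ)) (X 0) * PowerSeries.X := by
  have h := PowerSeries.lagrange_inversion_of_mul_quadratic_eq_C
    (PowerSeries.C_mul_rescale_mk_one_mul_rescale_mk_one_mul_eq_C _ _ _) (by simp [genU])
    natCast_succ_mul_coeff_genU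
  simp only [map_add, map_mul] at h ⊢
  linear_combination h
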